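/- The algebra D_q(m|n) generated by the q-derivatives ∂_i (i = 1,…,m+n) on the quantum Grassmann superalgebra Ω_q(m|n) is isomorphic as an associative superalgebra to the quantum affine (m|n)-superspace A_q^{m|n}: the assignment v_i ↦ ∂_i extends to an algebra isomorphism. -/

import Mathlib

/-- Index set of the monomial basis `x^(β) ⊗ x^μ` of `Ω_q(m|n)`. -/
abbrev OmegaIdx (m n : ℕ) := (Fin m → ℕ) × (Fin n → ℕ)

/-- The underlying vector space of the quantum Grassmann superalgebra `Ω_q(m|n)`. -/
abbrev Omega (k : Type*) [Field k] (m n : ℕ) := OmegaIdx m n →₀ k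

/-- Image of the basis vector `x^(β) ⊗ x^μ` under the `q`-derivative `∂_i`. -/
noncomputable def Dimage {k : Type*} [Field k] (q : k) (m n : ℕ)
    (i : Fin (m + n)) (p : OmegaIdx m n) : Omega k m n :=
  if h : (i : ℕ) < m then
    if p.1 ⟨i, h⟩ = 0 then 0
    else (q ^ (-(∑ s ∈ Finset.univ.filter (fun s : Fin m => (s : ℕ) < (i : ℕ)),
          (p.1 s : ℤ)))) • Finsupp.single (p.1 - Pi.single ⟨i, h⟩ 1, p.2) 1
  else
    if p.2 ⟨(i : ℕ) - m, by have := i.isLt; omega⟩ = 1 then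
      (q ^ (-(∑ s, (p.1 s : ℤ))) *
          (-q) ^ (-(∑ t ∈ Finset.univ.filter (fun t : Fin n => (t : ℕ) < (i : ℕ) - m),
            (p.2 t : ℤ)))) •
        Finsupp.single (p.1, p.2 - Pi.single ⟨(i : ℕ) - m, by have := i.isLt; omega⟩ 1) 1
    else 0

/-- The `q`-derivative `∂_i` on `Ω_q(m|n)` as an endomorphism. -/
noncomputable def Dop {k : Type*} [Field k] (q : k) (m n : ℕ) (i : Fin (m + n)) :
    Module.End k (Omega k m n) :=
  Finsupp.lsum k fun p => LinearMap.toSpanSingleton k (Omega k m n) (Dimage q m n i p)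

/-- The defining relations of the quantum affine `(m|n)`-superspace `A_q^{m|n}`. -/
inductive SupRel {k : Type*} [Field k] (q : k) (m n : ℕ) :
    FreeAlgebra k (Fin (m + n)) → FreeAlgebra k (Fin (m + n)) → Prop
  | qcomm (i j : Fin (m + n)) (hi : (i : ℕ) < m) (hij : i < j) :
      SupRel q m n (FreeAlgebra.ι k j * FreeAlgebra.ι k i)
        (q • (FreeAlgebra.ι k i * FreeAlgebra.ι k j))
  | sq (i : Fin (m + n)) (hi : m ≤ (i : ℕ)) :
      SupRel q m n (FreeAlgebra.ι k i * FreeAlgebra.ι k i) 0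
  | anti (i j : Fin (m + n)) (hi : m ≤ (i : ℕ)) (hij : i < j) :
      SupRel q m n (FreeAlgebra.ι k j * FreeAlgebra.ι k i)
        (-(q • (FreeAlgebra.ι k i * FreeAlgebra.ι k j)))

/-!
Both the generators `v_i` of `A_q^{m|n}` and the operators `∂_i` satisfy `X_j X_i = ε_i q X_i X_j`
for `i < j` (with `ε_i = 1` for even and `ε_i = -1` for odd `i`) and `X_i² = 0` for odd `i`, so
`v_i ↦ ∂_i` defines a surjection `A_q^{m|n} → D_q(m|n)`. Reordering with these relations shows
that the ordered monomials `v_{i₁} ⋯ v_{iₖ}` (`i₁ ≤ ⋯ ≤ iₖ`, no odd index repeated) span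
`A_q^{m|n}`. Their images are linearly independent: `∂_{i₁} ⋯ ∂_{iₖ}` sends `x^p` to a multiple
of `x^(p - α)`, where `α` is the exponent vector of the word, and the multiple is nonzero exactly
when `α ≤ p`. Hence the constant coefficient of the image of `x^α` singles out the word `α` among
all ordered words.
-/

theorem Finset.prod_zpow_neg_natCast {ι G : Type*} [DivisionCommMonoid G] (a : G)
    (s : Finset ι) (f : ι → ℕ) : ∏ i ∈ s, a ^ (-(f i : ℤ)) = a ^ (-∑ i ∈ s, (f i : ℤ)) := by
  simp only [zpow_neg, zpow_natCast, Finset.prod_inv_distrib, Finset.prod_pow_eq_pow_sum,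
    ← Nat.cast_sum]

theorem linearIndependent_of_dual_apply_ne_zero_iff {R M ι : Type*} [CommRing R]
    [NoZeroDivisors R] [AddCommGroup M] [Module R M] {v : ι → M} (f : ι → Module.Dual R M)
    (h : ∀ i j, f i (v j) ≠ 0 ↔ j = i) : LinearIndependent R v := by
  classical
  refine linearIndependent_iff'.mpr fun s c hs i hi => ?_
  have hfi : f i (∑ j ∈ s, c j • v j) = c i * f i (v i) := by
    rw [map_sum, Finset.sum_eq_single_of_mem i hi fun j _ hji => ?_, map_smul, smul_eq_mul]
    rw [map_smul, smul_eq_mul, not_ne_iff.mp (mt (h i j).mp hji), mul_zero]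
  rw [hs, map_zero, eq_comm, mul_eq_zero] at hfi
  exact hfi.resolve_right ((h i i).mpr rfl)

theorem Submodule.span_range_eq_top_of_mul_mem {R A ι : Type*} [CommSemiring R] [Semiring A]
    [Algebra R A] {s : Set A} (hs : Algebra.adjoin R s = ⊤) {v : ι → A}
    (h1 : 1 ∈ Submodule.span R (Set.range v))
    (hmul : ∀ a ∈ s, ∀ i, a * v i ∈ Submodule.span R (Set.range v)) :
    Submodule.span R (Set.range v) = ⊤ := by
  set S := Submodule.span R (Set.range v)
  have hmulS : ∀ a ∈ s, ∀ x ∈ S, a * x ∈ S := fun a ha x hx => by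
    have hle : S.map (LinearMap.mulLeft R a) ≤ S := by
      rw [Submodule.map_span_le]
      rintro _ ⟨i, rfl⟩
      exact hmul a ha i
    exact hle ⟨x, hx, rfl⟩
  refine Submodule.eq_top_iff'.mpr fun y => ?_
  have hy : y ∈ Algebra.adjoin R s := hs ▸ Algebra.mem_top
  suffices ∀ x ∈ S, y * x ∈ S by simpa using this 1 h1
  induction hy using Algebra.adjoin_induction with
  | mem a ha => exact hmulS a ha
  | algebraMap r => exact fun x hx => by rw [← Algebra.smul_def]; exact S.smul_mem r hx
  | add a b _ _ ha hb => exact fun x hx => by rw [add_mul]; exact S.add_mem (ha x hx) (hb x hx)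
  | mul a b _ _ ha hb => exact fun x hx => by rw [mul_assoc]; exact ha _ (hb x hx)

section Reordering

variable {R A α : Type*} [CommSemiring R] [Semiring A] [Algebra R A] [LinearOrder α]
  {g : α → A}

theorem exists_mul_prod_eq_smul_prod_orderedInsert
    (hg : ∀ ⦃i j⦄, i < j → ∃ c : R, g j * g i = c • (g i * g j)) (i : α) (l : List α) :
    ∃ c : R, g i * (l.map g).prod = c • ((l.orderedInsert (· ≤ ·) i).map g).prod := by
  induction l with
  | nil => exact ⟨1, by simp⟩
  | cons a l ih =>
    by_cases hia : i ≤ a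
    · exact ⟨1, by simp [hia]⟩
    · obtain ⟨c, hc⟩ := hg (lt_of_not_ge hia)
      obtain ⟨d, hd⟩ := ih
      refine ⟨c * d, ?_⟩
      simp only [List.orderedInsert, if_neg hia, List.map_cons, List.prod_cons]
      rw [← mul_assoc, hc, smul_mul_assoc, mul_assoc, hd, mul_smul_comm, smul_smul]

theorem mul_prod_eq_zero_of_mem
    (hg : ∀ ⦃i j⦄, i < j → ∃ c : R, g j * g i = c • (g i * g j)) {i : α} (hi : g i * g i = 0)
    {l : List α} (hl : l.Pairwise (· ≤ ·)) (hmem : i ∈ l) : g i * (l.map g).prod = 0 := by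
  induction l with
  | nil => exact absurd hmem List.not_mem_nil
  | cons a l ih =>
    rw [List.map_cons, List.prod_cons, ← mul_assoc]
    rcases eq_or_ne a i with rfl | hai
    · rw [hi, zero_mul]
    · have hmem' : i ∈ l := (List.mem_cons.mp hmem).resolve_left hai.symm
      obtain ⟨c, hc⟩ := hg (lt_of_le_of_ne (List.rel_of_pairwise_cons hl hmem') hai)
      rw [hc, smul_mul_assoc, mul_assoc, ih hl.of_cons hmem', mul_zero, smul_zero]

end Reordering

namespace Dq

variable {k : Type*} [Field k] {q : k} {m n : ℕ} {i j : Fin (m + n)} {p : OmegaIdx m n}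

section Exponents

/-- The exponent of `x_u` in the basis monomial indexed by `p`. -/
def expo (p : OmegaIdx m n) : Fin (m + n) → ℕ := Fin.append p.1 p.2

def ofExpo (e : Fin (m + n) → ℕ) : OmegaIdx m n :=
  (fun s => e (Fin.castAdd n s), fun t => e (Fin.natAdd m t))

@[simp] lemma expo_castAdd (p : OmegaIdx m n) (s : Fin m) :
    expo p (Fin.castAdd n s) = p.1 s :=
  Fin.append_left _ _ _

@[simp] lemma expo_natAdd (p : OmegaIdx m n) (t : Fin n) :
    expo p (Fin.natAdd m t) = p.2 t :=
  Fin.append_right _ _ _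

@[simp] lemma expo_ofExpo (e : Fin (m + n) → ℕ) : expo (ofExpo e) = e :=
  Fin.append_castAdd_natAdd

lemma expo_injective : Function.Injective (expo (m := m) (n := n)) := by
  intro p p' h
  ext s
  · simpa using congrFun h (Fin.castAdd n s)
  · simpa using congrFun h (Fin.natAdd m s)

lemma expo_add (p p' : OmegaIdx m n) : expo (p + p') = expo p + expo p' := by
  ext u; induction u using Fin.addCases <;> simp

lemma expo_sub (p p' : OmegaIdx m n) : expo (p - p') = expo p - expo p' := by
  ext u; induction u using Fin.addCases <;> simp

lemma expo_le_expo {p p' : OmegaIdx m n} : expo p ≤ expo p' ↔ p ≤ p' := by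
  refine ⟨fun h => ⟨fun s => ?_, fun t => ?_⟩, fun h u => ?_⟩
  · simpa using h (Fin.castAdd n s)
  · simpa using h (Fin.natAdd m t)
  · induction u using Fin.addCases
    · simpa using h.1 _
    · simpa using h.2 _

def unitIdx (i : Fin (m + n)) : OmegaIdx m n := ofExpo (Pi.single i 1)

def wordIdx (l : List (Fin (m + n))) : OmegaIdx m n := ofExpo fun u => l.count u

lemma unitIdx_castAdd (s : Fin m) : unitIdx (Fin.castAdd n s) = (Pi.single s 1, 0) := by
  ext u <;> simp [unitIdx, ofExpo, Pi.single_apply, Fin.ext_iff]; omega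

lemma unitIdx_natAdd (t : Fin n) : unitIdx (Fin.natAdd m t) = (0, Pi.single t 1) := by
  ext u <;> simp [unitIdx, ofExpo, Pi.single_apply, Fin.ext_iff]; omega

lemma sub_unitIdx_castAdd (s : Fin m) (p : OmegaIdx m n) :
    p - unitIdx (Fin.castAdd n s) = (p.1 - Pi.single s 1, p.2) := by
  rw [unitIdx_castAdd]
  exact Prod.ext rfl (tsub_zero p.2)

lemma sub_unitIdx_natAdd (t : Fin n) (p : OmegaIdx m n) :
    p - unitIdx (Fin.natAdd m t) = (p.1, p.2 - Pi.single t 1) := by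
  rw [unitIdx_natAdd]
  exact Prod.ext (tsub_zero p.1) rfl

lemma expo_sub_unitIdx (p : OmegaIdx m n) (i : Fin (m + n)) :
    expo (p - unitIdx i) = expo p - Pi.single i 1 := by
  rw [expo_sub, unitIdx, expo_ofExpo]

lemma expo_sub_unitIdx_of_ne (h : i ≠ j) : expo (p - unitIdx i) j = expo p j := by
  simp [expo_sub_unitIdx, Pi.single_eq_of_ne' h]

lemma unitIdx_le_iff : unitIdx i ≤ p ↔ expo p i ≠ 0 := by
  rw [← expo_le_expo, unitIdx, expo_ofExpo]
  refine ⟨fun h => by simpa [Nat.one_le_iff_ne_zero] using h i, fun h u => ?_⟩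
  rcases eq_or_ne u i with rfl | hu
  · simpa [Nat.one_le_iff_ne_zero] using h
  · simp [hu]

lemma wordIdx_nil : wordIdx ([] : List (Fin (m + n))) = 0 := by
  ext <;> simp [wordIdx, ofExpo]

lemma wordIdx_cons (i : Fin (m + n)) (l : List (Fin (m + n))) :
    wordIdx (i :: l) = unitIdx i + wordIdx l := by
  apply expo_injective
  ext u
  simp only [wordIdx, unitIdx, expo_add, expo_ofExpo, Pi.add_apply, List.count_cons,
    Pi.single_apply, beq_iff_eq]
  split_ifs <;> simp_all [add_comm]

end Exponents

section Operators

/-- `∂_j ∂_i = signedQ q m i • ∂_i ∂_j` for `i < j` covers both the `qcomm` and the `anti`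
relations. -/
def signedQ (q : k) (m : ℕ) {n : ℕ} (u : Fin (m + n)) : k := if (u : ℕ) < m then q else -q

lemma signedQ_of_lt (hi : (i : ℕ) < m) : signedQ q m i = q := if_pos hi

lemma signedQ_of_le (hi : m ≤ (i : ℕ)) : signedQ q m i = -q := if_neg (not_lt.mpr hi)

lemma signedQ_ne_zero (hq : q ≠ 0) (u : Fin (m + n)) : signedQ q m u ≠ 0 := by
  unfold signedQ; split_ifs <;> simpa

/-- The condition under which `∂_i x^p ≠ 0`. -/
def Admissible (i : Fin (m + n)) (p : OmegaIdx m n) : Prop :=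
  if (i : ℕ) < m then expo p i ≠ 0 else expo p i = 1

instance (i : Fin (m + n)) : DecidablePred (Admissible i) :=
  fun p => inferInstanceAs (Decidable (if (i : ℕ) < m then expo p i ≠ 0 else expo p i = 1))

/-- The coefficient of `∂_i x^p`; this single product reproduces both cases of `Dimage`. -/
def weight (q : k) (i : Fin (m + n)) (p : OmegaIdx m n) : k :=
  ∏ u ∈ Finset.univ.filter (· < i), signedQ q m u ^ (-(expo p u : ℤ))

lemma weight_ne_zero (hq : q ≠ 0) (i : Fin (m + n)) (p : OmegaIdx m n) : weight q i p ≠ 0 :=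
  Finset.prod_ne_zero_iff.mpr fun u _ => zpow_ne_zero _ (signedQ_ne_zero hq u)

lemma admissible_castAdd (s : Fin m) (p : OmegaIdx m n) :
    Admissible (Fin.castAdd n s) p ↔ p.1 s ≠ 0 := by
  simp [Admissible]

lemma admissible_natAdd (t : Fin n) (p : OmegaIdx m n) :
    Admissible (Fin.natAdd m t) p ↔ p.2 t = 1 := by
  simp [Admissible]

lemma weight_castAdd (q : k) (s : Fin m) (p : OmegaIdx m n) :
    weight q (Fin.castAdd n s) p =
      q ^ (-∑ u ∈ Finset.univ.filter (fun u : Fin m => (u : ℕ) < s), (p.1 u : ℤ)) := by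
  rw [weight, Finset.prod_filter, Fin.prod_univ_add, ← Finset.prod_zpow_neg_natCast,
    Finset.prod_filter]
  have hm : ∀ t : Fin n, ¬ m + (t : ℕ) < s := fun t => by omega
  simp only [Fin.lt_def, Fin.val_castAdd, Fin.val_natAdd]
  simp [signedQ, hm]

lemma weight_natAdd (q : k) (t : Fin n) (p : OmegaIdx m n) :
    weight q (Fin.natAdd m t) p =
      q ^ (-∑ s, (p.1 s : ℤ)) *
        (-q) ^ (-∑ u ∈ Finset.univ.filter (fun u : Fin n => (u : ℕ) < t), (p.2 u : ℤ)) := by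
  rw [weight, Finset.prod_filter, Fin.prod_univ_add, ← Finset.prod_zpow_neg_natCast,
    ← Finset.prod_zpow_neg_natCast, Finset.prod_filter]
  have hm : ∀ s : Fin m, (s : ℕ) < m + t := fun s => by omega
  simp only [Fin.lt_def, Fin.val_castAdd, Fin.val_natAdd]
  simp [signedQ, hm]

theorem Dop_single (q : k) (i : Fin (m + n)) (p : OmegaIdx m n) :
    Dop q m n i (Finsupp.single p 1) =
      if Admissible i p then weight q i p • Finsupp.single (p - unitIdx i) 1 else 0 := by
  rw [Dop, Finsupp.lsum_single, LinearMap.toSpanSingleton_apply, one_smul]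
  induction i using Fin.addCases with
  | left s =>
    rw [Dimage, dif_pos (by simp), if_congr (admissible_castAdd s p) rfl rfl, weight_castAdd,
      sub_unitIdx_castAdd, ite_not]
    rfl
  | right t =>
    rw [Dimage, dif_neg (by simp), if_congr (admissible_natAdd t p) rfl rfl, weight_natAdd,
      sub_unitIdx_natAdd]
    simp only [Fin.val_natAdd, Nat.add_sub_cancel_left]

lemma expo_ne_zero_of_admissible (h : Admissible i p) : expo p i ≠ 0 := by
  unfold Admissible at h
  split_ifs at h <;> omega

lemma admissible_iff_unitIdx_le (hp : ∀ t, p.2 t ≤ 1) : Admissible i p ↔ unitIdx i ≤ p := by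
  rw [unitIdx_le_iff]
  induction i using Fin.addCases with
  | left s => rw [admissible_castAdd, expo_castAdd]
  | right t =>
    rw [admissible_natAdd, expo_natAdd]
    have := hp t
    omega

lemma admissible_sub_unitIdx_of_ne (h : i ≠ j) :
    Admissible j (p - unitIdx i) ↔ Admissible j p := by
  simp only [Admissible, expo_sub_unitIdx_of_ne h]

lemma not_admissible_sub_unitIdx_self (hi : m ≤ (i : ℕ)) (h : Admissible i p) :
    ¬ Admissible i (p - unitIdx i) := by
  simp only [Admissible, expo_sub_unitIdx, Pi.sub_apply, Pi.single_eq_same,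
    if_neg (not_lt.mpr hi)] at h ⊢
  omega

lemma weight_sub_unitIdx_of_not_lt (q : k) (h : ¬ i < j) :
    weight q j (p - unitIdx i) = weight q j p := by
  refine Finset.prod_congr rfl fun u hu => ?_
  rw [expo_sub_unitIdx_of_ne]
  rintro rfl
  exact h (Finset.mem_filter.mp hu).2

lemma weight_sub_unitIdx_of_lt (hq : q ≠ 0) (hp : expo p i ≠ 0) (h : i < j) :
    weight q j (p - unitIdx i) = signedQ q m i * weight q j p := by
  have hi : i ∈ Finset.univ.filter (· < j) := Finset.mem_filter.mpr ⟨Finset.mem_univ i, h⟩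
  unfold weight
  rw [← Finset.mul_prod_erase _ _ hi, ← Finset.mul_prod_erase _ _ hi, ← mul_assoc]
  congr 1
  · rw [expo_sub_unitIdx, Pi.sub_apply, Pi.single_eq_same,
      Nat.cast_sub (Nat.one_le_iff_ne_zero.mpr hp), Nat.cast_one, neg_sub, sub_eq_add_neg,
      zpow_add₀ (signedQ_ne_zero hq i), zpow_one]
  · refine Finset.prod_congr rfl fun u hu => ?_
    rw [expo_sub_unitIdx_of_ne (Finset.ne_of_mem_erase hu).symm]

lemma Dop_apply_Dop_single (q : k) (i j : Fin (m + n)) (p : OmegaIdx m n) :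
    Dop q m n j (Dop q m n i (Finsupp.single p 1)) =
      if Admissible i p ∧ Admissible j (p - unitIdx i) then
        (weight q i p * weight q j (p - unitIdx i)) •
          Finsupp.single (p - unitIdx i - unitIdx j) 1
      else 0 := by
  rw [Dop_single]
  split_ifs with hi hij hij
  · rw [map_smul, Dop_single, if_pos hij.2, smul_smul]
  · rw [map_smul, Dop_single, if_neg (fun h => hij ⟨hi, h⟩), smul_zero]
  · exact absurd hij.1 hi
  · exact map_zero _

theorem Dop_mul_Dop_of_lt (hq : q ≠ 0) (h : i < j) :
    Dop q m n j * Dop q m n i = signedQ q m i • (Dop q m n i * Dop q m n j) := by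
  refine Finsupp.basisSingleOne.ext fun p => ?_
  simp only [Finsupp.coe_basisSingleOne, Module.End.mul_apply, LinearMap.smul_apply,
    Dop_apply_Dop_single, admissible_sub_unitIdx_of_ne h.ne,
    admissible_sub_unitIdx_of_ne h.ne']
  by_cases hp : Admissible i p ∧ Admissible j p
  · rw [if_pos hp, if_pos hp.symm, smul_smul,
      weight_sub_unitIdx_of_lt hq (expo_ne_zero_of_admissible hp.1) h,
      weight_sub_unitIdx_of_not_lt q h.asymm, tsub_right_comm]
    ring_nf
  · rw [if_neg hp, if_neg (hp ∘ And.symm), smul_zero]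

theorem Dop_mul_self (q : k) (hi : m ≤ (i : ℕ)) : Dop q m n i * Dop q m n i = 0 := by
  refine Finsupp.basisSingleOne.ext fun p => ?_
  rw [Finsupp.coe_basisSingleOne, Module.End.mul_apply, Dop_apply_Dop_single,
    if_neg fun h => not_admissible_sub_unitIdx_self hi h.1 h.2]
  rfl

theorem exists_prod_map_Dop_single (hq : q ≠ 0) (l : List (Fin (m + n))) (p : OmegaIdx m n) :
    ∃ c : k, (l.map (Dop q m n)).prod (Finsupp.single p 1) =
        c • Finsupp.single (p - wordIdx l) 1 ∧
      ((∀ t, p.2 t ≤ 1) → (c ≠ 0 ↔ wordIdx l ≤ p)) := by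
  induction l with
  | nil => exact ⟨1, by simp [wordIdx_nil], fun _ => by simp [wordIdx_nil]⟩
  | cons i l ih =>
    obtain ⟨c, hc, hiff⟩ := ih
    set x := p - wordIdx l
    refine ⟨c * if Admissible i x then weight q i x else 0, ?_, fun hp => ?_⟩
    · rw [List.map_cons, List.prod_cons, Module.End.mul_apply, hc, map_smul, Dop_single,
        wordIdx_cons, add_comm, ← tsub_tsub]
      split_ifs
      · rw [smul_smul]
      · rw [smul_zero, mul_zero, zero_smul]
    · have hx : ∀ t, x.2 t ≤ 1 := fun t => (Nat.sub_le _ _).trans (hp t)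
      rw [mul_ne_zero_iff, hiff hp, ite_ne_right_iff, and_iff_left (weight_ne_zero hq i x),
        admissible_iff_unitIdx_le hx, wordIdx_cons]
      exact ⟨fun ⟨h1, h2⟩ => (le_tsub_iff_right h1).mp h2,
        fun h => ⟨le_add_self.trans h, (le_tsub_iff_right (le_add_self.trans h)).mpr h⟩⟩

end Operators

section Superspace

variable (q m n) in
noncomputable def gen (i : Fin (m + n)) : RingQuot (SupRel q m n) :=
  RingQuot.mkAlgHom k (SupRel q m n) (FreeAlgebra.ι k i)

lemma gen_mul_gen_of_lt (h : i < j) :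
    gen q m n j * gen q m n i = signedQ q m i • (gen q m n i * gen q m n j) := by
  by_cases hi : (i : ℕ) < m
  · rw [signedQ_of_lt hi]
    simpa [gen] using RingQuot.mkAlgHom_rel k (SupRel.qcomm (q := q) i j hi h)
  · have hrel := RingQuot.mkAlgHom_rel k (SupRel.anti (q := q) i j (not_lt.mp hi) h)
    simp only [map_mul, map_neg, map_smul] at hrel
    rw [signedQ_of_le (not_lt.mp hi)]
    exact hrel.trans (neg_smul q _).symm

lemma gen_mul_self (hi : m ≤ (i : ℕ)) : gen q m n i * gen q m n i = 0 := by
  simpa [gen] using RingQuot.mkAlgHom_rel k (SupRel.sq (q := q) i hi)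

variable (q m n) in
lemma adjoin_range_gen : Algebra.adjoin k (Set.range (gen q m n)) = ⊤ := by
  have : gen q m n = RingQuot.mkAlgHom k (SupRel q m n) ∘ FreeAlgebra.ι k := rfl
  rw [Algebra.adjoin_range_eq_range_freeAlgebra_lift, this, FreeAlgebra.lift_comp_ι,
    AlgHom.range_eq_top]
  exact RingQuot.mkAlgHom_surjective k (SupRel q m n)

variable (m n) in
/-- Index set of the ordered (PBW) monomials of `A_q^{m|n}`. -/
def NormalWord : Type :=
  {l : List (Fin (m + n)) //
    l.Pairwise (· ≤ ·) ∧ ∀ i : Fin (m + n), m ≤ (i : ℕ) → l.count i ≤ 1}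

lemma NormalWord.wordIdx_injective :
    Function.Injective fun w : NormalWord m n => wordIdx w.1 := by
  intro w w' h
  have hcount : ∀ u, w.1.count u = w'.1.count u := fun u => by
    simpa [wordIdx] using congrFun (congrArg expo h) u
  exact Subtype.ext (List.Perm.eq_of_pairwise (fun _ _ _ _ => le_antisymm) w.2.1 w'.2.1
    (List.perm_iff_count.mpr hcount))

lemma NormalWord.wordIdx_snd_le_one (w : NormalWord m n) (t : Fin n) :
    (wordIdx w.1).2 t ≤ 1 :=
  w.2.2 (Fin.natAdd m t) (by simp)

lemma exists_gen_mul_prod_eq_smul (i : Fin (m + n)) (w : NormalWord m n) :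
    ∃ (c : k) (w' : NormalWord m n),
      gen q m n i * (w.1.map (gen q m n)).prod = c • (w'.1.map (gen q m n)).prod := by
  have hg : ∀ ⦃i j⦄, i < j →
      ∃ c : k, gen q m n j * gen q m n i = c • (gen q m n i * gen q m n j) :=
    fun i j h => ⟨_, gen_mul_gen_of_lt h⟩
  by_cases hzero : m ≤ (i : ℕ) ∧ i ∈ w.1
  · refine ⟨0, w, ?_⟩
    rw [mul_prod_eq_zero_of_mem hg (gen_mul_self hzero.1) w.2.1 hzero.2, zero_smul]
  obtain ⟨c, hc⟩ := exists_mul_prod_eq_smul_prod_orderedInsert hg i w.1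
  refine ⟨c, ⟨w.1.orderedInsert (· ≤ ·) i, w.2.1.orderedInsert i _, fun u hu => ?_⟩, hc⟩
  rw [(List.perm_orderedInsert _ i w.1).count_eq, List.count_cons]
  by_cases hui : u = i
  · subst hui
    simp [List.count_eq_zero.mpr fun h => hzero ⟨hu, h⟩]
  · simpa [Ne.symm hui] using w.2.2 u hu

variable (q m n) in
lemma span_prod_gen_eq_top :
    Submodule.span k (Set.range fun w : NormalWord m n => (w.1.map (gen q m n)).prod) = ⊤ := by
  refine Submodule.span_range_eq_top_of_mul_mem (adjoin_range_gen q m n) ?_ ?_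
  · exact Submodule.subset_span ⟨⟨[], List.Pairwise.nil, fun _ _ => by simp⟩, List.prod_nil⟩
  · rintro _ ⟨i, rfl⟩ w
    obtain ⟨c, w', hw⟩ := exists_gen_mul_prod_eq_smul (q := q) i w
    rw [hw]
    exact Submodule.smul_mem _ c (Submodule.subset_span ⟨w', rfl⟩)

end Superspace

section Isomorphism

noncomputable def dopHom (hq : q ≠ 0) :
    RingQuot (SupRel q m n) →ₐ[k] Module.End k (Omega k m n) :=
  RingQuot.liftAlgHom k ⟨FreeAlgebra.lift k (Dop q m n), fun x y h => by
    cases h with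
    | qcomm i j hi hij => simpa [signedQ_of_lt hi] using Dop_mul_Dop_of_lt hq hij
    | sq i hi => simpa using Dop_mul_self q hi
    | anti i j hi hij =>
      simp only [map_mul, map_neg, map_smul, FreeAlgebra.lift_ι_apply]
      rw [Dop_mul_Dop_of_lt hq hij, signedQ_of_le hi]
      exact neg_smul q (Dop q m n i * Dop q m n j)⟩

lemma dopHom_gen (hq : q ≠ 0) (i : Fin (m + n)) : dopHom hq (gen q m n i) = Dop q m n i := by
  rw [dopHom, gen, RingQuot.liftAlgHom_mkAlgHom_apply, FreeAlgebra.lift_ι_apply]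

lemma range_dopHom (hq : q ≠ 0) :
    (dopHom (m := m) (n := n) hq).range = Algebra.adjoin k (Set.range (Dop q m n)) := by
  have hcomp : (dopHom hq).comp (RingQuot.mkAlgHom k (SupRel q m n)) =
      FreeAlgebra.lift k (Dop q m n) :=
    AlgHom.ext fun _ => RingQuot.liftAlgHom_mkAlgHom_apply _ _ _ _
  rw [Algebra.adjoin_range_eq_range_freeAlgebra_lift, ← hcomp, AlgHom.range_comp,
    (AlgHom.range_eq_top _).mpr (RingQuot.mkAlgHom_surjective k _), Algebra.map_top]

theorem linearIndependent_prod_map_Dop (hq : q ≠ 0) :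
    LinearIndependent k fun w : NormalWord m n => (w.1.map (Dop q m n)).prod := by
  refine linearIndependent_of_dual_apply_ne_zero_iff (M := Module.End k (Omega k m n))
    (fun w => (Finsupp.lapply 0).comp
      (LinearMap.applyₗ (M₂ := Omega k m n) (Finsupp.single (wordIdx w.1) 1)))
    fun w w' => ?_
  obtain ⟨c, hc, hiff⟩ := exists_prod_map_Dop_single hq w'.1 (wordIdx w.1)
  change ((w'.1.map (Dop q m n)).prod (Finsupp.single (wordIdx w.1) 1)) 0 ≠ 0 ↔ w' = w
  rw [hc, Finsupp.smul_apply, Finsupp.single_apply, smul_eq_mul, mul_ne_zero_iff,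
    ite_ne_right_iff, and_iff_left one_ne_zero, tsub_eq_zero_iff_le,
    hiff w.wordIdx_snd_le_one, ← le_antisymm_iff, NormalWord.wordIdx_injective.eq_iff]

theorem dopHom_injective (hq : q ≠ 0) : Function.Injective (dopHom (m := m) (n := n) hq) := by
  have hv : (dopHom hq).toLinearMap ∘ (fun w : NormalWord m n => (w.1.map (gen q m n)).prod)
      = fun w => (w.1.map (Dop q m n)).prod := by
    ext1 w
    simp [map_list_prod, Function.comp_def, dopHom_gen]
  refine LinearMap.injective_of_linearIndependent (N := Module.End k (Omega k m n))
    (f := (dopHom hq).toLinearMap) (span_prod_gen_eq_top q m n) ?_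
  rw [hv]
  exact linearIndependent_prod_map_Dop hq

end Isomorphism

end Dq

/-- The algebra `D_q(m|n)` generated by the `q`-derivatives `∂_i` on `Ω_q(m|n)`
is isomorphic, as an associative algebra, to the quantum affine
`(m|n)`-superspace `A_q^{m|n}`; the isomorphism extends `v_i ↦ ∂_i`. -/
theorem Dq_iso_affine_superspace {k : Type*} [Field k] (q : k) (hq : q ≠ 0) (m n : ℕ) :
    ∃ φ : RingQuot (SupRel q m n) ≃ₐ[k]
        Algebra.adjoin k (Set.range fun i : Fin (m + n) => Dop q m n i),
      ∀ i : Fin (m + n),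
        φ (RingQuot.mkAlgHom k (SupRel q m n) (FreeAlgebra.ι k i)) =
          ⟨Dop q m n i, Algebra.subset_adjoin ⟨i, rfl⟩⟩ :=
  ⟨(AlgEquiv.ofInjective _ (Dq.dopHom_injective hq)).trans
      (Subalgebra.equivOfEq _ _ (Dq.range_dopHom hq)),
    fun i => Subtype.ext (Dq.dopHom_gen hq i)⟩
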